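/- Let k ≥ 1, N = C(2k, k), and A a nonempty family of k-subsets of [2k] with |A| ≤ N/2. Then δ(A) := (|∇A| - |A|)/|A| ≥ (log 2 / k) · log₂(N / (2|A|)), where ∇A is the upper shadow of A in the (k+1)-subsets of [2k]. -/

import Mathlib

/-!
Replace `A` by the family `B = Aᶜˢ` of complements, whose shadow is the complement family of
`∇A`. Pick a real `x ∈ [k, 2k - 1]` with `C(x, k) = |A|`. Lovász's real form of Kruskal–Katona
gives `|∇A| = |∂B| ≥ C(x, k - 1) = t |A|` with `t = k / (x - k + 1)`; it follows from the
Kruskal–Katona theorem, which reduces to colex initial segments, and Frankl's induction on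
shifted families. Comparing the factors of `C(2k - 1, k)` and `C(x, k)` one by one gives
`N / 2 = C(2k - 1, k) ≤ t ^ k |A|`, hence `log (N / 2|A|) ≤ k log t ≤ k (t - 1) ≤ k δ(A)`.
-/

open Finset Polynomial
open scoped Nat FinsetFamily

namespace Ring

section Field

variable {K : Type*} [Field K] [CharZero K]

theorem choose_eq_descPochhammer_eval_div (x : K) (k : ℕ) :
    choose x k = (descPochhammer K k).eval x / k ! := by
  rw [choose_eq_smul, smul_eq_mul, ← aeval_eq_smeval, ← eval_map_algebraMap,
    descPochhammer_map, inv_mul_eq_div]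

theorem choose_succ_right_eq (x : K) (k : ℕ) :
    choose x (k + 1) * (k + 1) = choose x k * (x - k) := by
  simp only [choose_eq_descPochhammer_eval_div, descPochhammer_succ_eval, Nat.factorial_succ]
  push_cast
  field_simp

end Field

section LinearOrderedField

variable {K : Type*} [Field K] [LinearOrder K] [IsStrictOrderedRing K]

theorem choose_nonneg {x : K} {k : ℕ} (h : (k : K) - 1 ≤ x) : 0 ≤ choose x k := by
  rw [choose_eq_descPochhammer_eval_div]
  exact div_nonneg (descPochhammer_nonneg h) (by positivity)

theorem monotoneOn_choose (k : ℕ) : MonotoneOn (choose · k) (Set.Ici ((k : K) - 1)) := by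
  intro a ha b hb hab
  simp only [choose_eq_descPochhammer_eval_div]
  exact div_le_div_of_nonneg_right (monotoneOn_descPochhammer_eval k ha hb hab) (by positivity)

theorem choose_le_add_one {r : ℕ} {x : K} (h₁ : (r : K) - 1 ≤ x) (h₂ : x ≤ r + 1) :
    choose x r ≤ r + 1 := by
  calc choose x r ≤ choose ((r + 1 : ℕ) : K) r :=
        monotoneOn_choose r h₁ (Set.mem_Ici.2 (by push_cast; linarith)) (by push_cast; exact h₂)
    _ = r + 1 := by rw [choose_natCast, Nat.choose_succ_self_right]; push_cast; rfl

theorem choose_le_pow_mul_choose {r : ℕ} {x y : K} (hx : r < x) (hxy : x ≤ y) :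
    choose y (r + 1) ≤ ((y - r) / (x - r)) ^ (r + 1) * choose x (r + 1) := by
  have hxr : 0 < x - r := sub_pos.2 hx
  simp only [choose_eq_descPochhammer_eval_div, descPochhammer_eval_eq_prod_range, ← mul_div_assoc]
  gcongr
  calc ∏ i ∈ range (r + 1), (y - i) ≤ ∏ i ∈ range (r + 1), ((y - r) / (x - r) * (x - i)) := by
        refine prod_le_prod (fun i hi => ?_) (fun i hi => ?_) <;>
          have hir : (i : K) ≤ r := by exact_mod_cast Nat.lt_succ_iff.1 (mem_range.1 hi)
        · linarith
        · rw [div_mul_eq_mul_div, le_div_iff₀ hxr]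
          nlinarith [mul_nonneg (sub_nonneg.2 hxy) (sub_nonneg.2 hir)]
    _ = _ := by rw [prod_mul_distrib, prod_const, card_range]

end LinearOrderedField

theorem continuous_choose (k : ℕ) : Continuous (choose · k : ℝ → ℝ) := by
  simp only [choose_eq_descPochhammer_eval_div]
  exact continuous_descPochhammer_eval.div_const _

theorem exists_mem_Icc_choose_eq {k m : ℕ} (hkm : k ≤ m) {a : ℝ} (h₁ : 1 ≤ a)
    (h₂ : a ≤ m.choose k) : ∃ x ∈ Set.Icc (k : ℝ) m, choose x k = a := by
  have hmem : a ∈ Set.Icc (choose (k : ℝ) k) (choose (m : ℝ) k) := by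
    simpa [choose_natCast] using And.intro h₁ h₂
  exact intermediate_value_Icc (by exact_mod_cast hkm) (continuous_choose k).continuousOn hmem

end Ring

theorem Nat.choose_two_mul_succ_eq_two_mul_choose (r : ℕ) :
    (2 * (r + 1)).choose (r + 1) = 2 * (2 * r + 1).choose (r + 1) := by
  rw [show 2 * (r + 1) = 2 * r + 1 + 1 by ring, choose_succ_succ', ← choose_symm_half]
  ring

theorem Real.log_le_mul_sub_one_of_le_pow {z t : ℝ} {k : ℕ} (hz : 0 < z) (ht : 0 < t)
    (h : z ≤ t ^ k) : log z ≤ k * (t - 1) :=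
  calc log z ≤ log (t ^ k) := log_le_log hz h
    _ = k * log t := log_pow t k
    _ ≤ k * (t - 1) := by gcongr; exact log_le_sub_one_of_pos ht

namespace Finset

variable {α β : Type*} [DecidableEq α] {𝒜 : Finset (Finset α)} {s : Finset α} {r : ℕ}

theorem card_le_card_shadow (hs : s ∈ 𝒜) : #s ≤ #(∂ 𝒜) := by
  rw [← card_image_of_injOn (erase_injOn s)]
  exact card_le_card fun t ht => by
    obtain ⟨a, ha, rfl⟩ := mem_image.1 ht
    exact erase_mem_shadow hs ha

theorem _root_.Set.Sized.memberSubfamily (h𝒜 : (𝒜 : Set (Finset α)).Sized (r + 1)) (a : α) :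
    (𝒜.memberSubfamily a : Set (Finset α)).Sized r := by
  intro s hs
  rw [mem_coe, mem_memberSubfamily] at hs
  have := h𝒜 hs.1
  rwa [card_insert_of_notMem hs.2, Nat.add_right_cancel_iff] at this

/-- `∂ 𝒜` contains the link of `a` and, disjointly, the sets `insert a t` for `t` in the
shadow of the link. -/
theorem card_memberSubfamily_add_card_shadow_le (a : α) (𝒜 : Finset (Finset α)) :
    #(𝒜.memberSubfamily a) + #(∂ (𝒜.memberSubfamily a)) ≤ #(∂ 𝒜) := by
  have havoid : ∀ t ∈ ∂ (𝒜.memberSubfamily a), a ∉ t := fun t ht hat => by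
    obtain ⟨s, hs, b, -, rfl⟩ := mem_shadow_iff.1 ht
    exact (mem_memberSubfamily.1 hs).2 (mem_of_mem_erase hat)
  have hdisj : Disjoint (𝒜.memberSubfamily a) ((∂ (𝒜.memberSubfamily a)).image (insert a)) :=
    disjoint_left.2 fun s hs hs' => by
      obtain ⟨t, -, rfl⟩ := mem_image.1 hs'
      exact (mem_memberSubfamily.1 hs).2 (mem_insert_self a t)
  have hsub : 𝒜.memberSubfamily a ∪ (∂ (𝒜.memberSubfamily a)).image (insert a) ⊆ ∂ 𝒜 := by
    refine union_subset (fun s hs => ?_) (fun u hu => ?_)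
    · obtain ⟨hs, has⟩ := mem_memberSubfamily.1 hs
      simpa [has] using erase_mem_shadow hs (mem_insert_self a s)
    · obtain ⟨t, ht, rfl⟩ := mem_image.1 hu
      obtain ⟨s, hs, b, hb, rfl⟩ := mem_shadow_iff.1 ht
      obtain ⟨hs, has⟩ := mem_memberSubfamily.1 hs
      have hba : b ≠ a := fun h => has (h ▸ hb)
      rw [← erase_insert_of_ne hba.symm]
      exact erase_mem_shadow hs (mem_insert_of_mem hb)
  calc #(𝒜.memberSubfamily a) + #(∂ (𝒜.memberSubfamily a))
      = #(𝒜.memberSubfamily a ∪ (∂ (𝒜.memberSubfamily a)).image (insert a)) := by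
        rw [card_union_of_disjoint hdisj, card_image_of_injOn]
        exact fun t ht u hu htu => by
          rw [← erase_insert (havoid t ht), ← erase_insert (havoid u hu), htu]
    _ ≤ #(∂ 𝒜) := card_le_card hsub

theorem shadow_map_mapEmbedding [DecidableEq β] (f : α ↪ β) (𝒜 : Finset (Finset α)) :
    ∂ (𝒜.map (mapEmbedding f).toEmbedding) = (∂ 𝒜).map (mapEmbedding f).toEmbedding := by
  ext t
  simp only [mem_shadow_iff, mem_map, RelEmbedding.coe_toEmbedding, mapEmbedding_apply]
  constructor
  · rintro ⟨_, ⟨s, hs, rfl⟩, _, hb, rfl⟩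
    obtain ⟨a, ha, rfl⟩ := mem_map.1 hb
    exact ⟨s.erase a, ⟨s, hs, a, ha, rfl⟩, map_erase f s a⟩
  · rintro ⟨_, ⟨s, hs, a, ha, rfl⟩, rfl⟩
    exact ⟨s.map f, ⟨s, hs, rfl⟩, f a, mem_map_of_mem f ha, (map_erase f s a).symm⟩

theorem exists_subset_card_eq_forall_le_mem [LinearOrder β] (P : Finset β) {a : ℕ}
    (ha : a ≤ #P) : ∃ Q ⊆ P, #Q = a ∧ ∀ x ∈ Q, ∀ y ∈ P, y ≤ x → y ∈ Q := by
  set f := P.orderEmbOfFin rfl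
  refine ⟨(univ.filter fun i : Fin #P => (i : ℕ) < a).map f.toEmbedding, ?_, ?_, ?_⟩
  · intro y hy
    obtain ⟨i, -, rfl⟩ := mem_map.1 hy
    exact P.orderEmbOfFin_mem rfl i
  · rw [card_map, Fin.card_filter_val_lt, min_eq_right ha]
  · intro x hx y hy hyx
    obtain ⟨i, hi, rfl⟩ := mem_map.1 hx
    obtain ⟨j, rfl⟩ : y ∈ Set.range f := by rwa [P.range_orderEmbOfFin rfl]
    refine mem_map_of_mem _ (mem_filter.2 ⟨mem_univ j, ?_⟩)
    exact lt_of_le_of_lt (f.le_iff_le.1 hyx) (mem_filter.1 hi).2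

end Finset

namespace Finset.Colex

variable {α : Type*} [LinearOrder α] {𝒞 : Finset (Finset α)} {k : ℕ}

theorem exists_isInitSeg_card_eq [Fintype α] {a : ℕ} (ha : a ≤ (Fintype.card α).choose k) :
    ∃ 𝒞 : Finset (Finset α), IsInitSeg 𝒞 k ∧ #𝒞 = a := by
  have hcard : #((powersetCard k (univ : Finset α)).image toColex) =
      (Fintype.card α).choose k := by
    rw [card_image_of_injective _ toColex.injective, card_powersetCard, card_univ]
  obtain ⟨Q, hQ, rfl, hQlow⟩ := exists_subset_card_eq_forall_le_mem _ (hcard ▸ ha)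
  refine ⟨Q.image ofColex, ⟨fun s hs => ?_, fun s t hs ⟨hts, ht⟩ => ?_⟩,
    card_image_of_injective _ ofColex.injective⟩
  · obtain ⟨s, hsQ, rfl⟩ := mem_image.1 (mem_coe.1 hs)
    obtain ⟨t, ht, rfl⟩ := mem_image.1 (hQ hsQ)
    exact (mem_powersetCard.1 ht).2
  · obtain ⟨s, hsQ, rfl⟩ := mem_image.1 hs
    refine mem_image.2 ⟨toColex t, hQlow s hsQ _ ?_ hts.le, rfl⟩
    exact mem_image_of_mem _ (mem_powersetCard.2 ⟨subset_univ t, ht⟩)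

theorem IsInitSeg.insert_erase_mem (h𝒞 : IsInitSeg 𝒞 k) {s : Finset α} (hs : s ∈ 𝒞) {i j : α}
    (hj : j ∈ s) (hij : i < j) (hi : i ∉ s) : insert i (s.erase j) ∈ 𝒞 := by
  have hie : i ∉ s.erase j := fun h => hi (mem_of_mem_erase h)
  refine h𝒞.2 hs ⟨?_, ?_⟩
  · conv_rhs => rw [← insert_erase hj]
    exact (insert_lt_insert hie (notMem_erase j s)).2 hij
  · rw [card_insert_of_notMem hie, card_erase_add_one hj, h𝒞.1 hs]

end Finset.Colex

def IsShiftedFrom (e : ℕ) (𝒜 : Finset (Finset ℕ)) : Prop :=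
  (∀ s ∈ 𝒜, ∀ a ∈ s, e ≤ a) ∧
    ∀ s ∈ 𝒜, ∀ j ∈ s, ∀ i, e ≤ i → i < j → i ∉ s → insert i (s.erase j) ∈ 𝒜

theorem Finset.Colex.IsInitSeg.isShiftedFrom_map_valEmbedding {n k : ℕ}
    {𝒞 : Finset (Finset (Fin n))} (h𝒞 : IsInitSeg 𝒞 k) :
    IsShiftedFrom 0 (𝒞.map (mapEmbedding Fin.valEmbedding).toEmbedding) := by
  refine ⟨fun _ _ a _ => Nat.zero_le a, fun t ht j hj i _ hij hit => ?_⟩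
  obtain ⟨s, hs, rfl⟩ := mem_map.1 ht
  simp only [RelEmbedding.coe_toEmbedding, mapEmbedding_apply] at hj hit ⊢
  obtain ⟨j, hj', rfl⟩ := mem_map.1 hj
  set i' : Fin n := ⟨i, hij.trans j.isLt⟩
  have hi' : i' ∉ s := fun h => hit (mem_map_of_mem _ h)
  refine mem_map.2 ⟨_, h𝒞.insert_erase_mem hs hj' (show i' < j from hij) hi', ?_⟩
  simp [map_insert, map_erase, i']

namespace IsShiftedFrom

variable {e : ℕ} {𝒜 : Finset (Finset ℕ)}

theorem memberSubfamily (h : IsShiftedFrom e 𝒜) :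
    IsShiftedFrom (e + 1) (𝒜.memberSubfamily e) := by
  refine ⟨fun s hs a ha => ?_, fun s hs j hj i hi hij his => ?_⟩
  · obtain ⟨hs, hes⟩ := mem_memberSubfamily.1 hs
    have := h.1 _ hs a (mem_insert_of_mem ha)
    have : a ≠ e := fun hae => hes (hae ▸ ha)
    omega
  · obtain ⟨hs, hes⟩ := mem_memberSubfamily.1 hs
    have hje : j ≠ e := fun hje => hes (hje ▸ hj)
    have hie : i ≠ e := by omega
    have := h.2 _ hs j (mem_insert_of_mem hj) i (by omega) hij (by simp [hie, his])
    rw [erase_insert_of_ne hje.symm, insert_comm] at this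
    exact mem_memberSubfamily.2 ⟨this, by simp [Ne.symm hie, hes]⟩

theorem nonMemberSubfamily (h : IsShiftedFrom e 𝒜) :
    IsShiftedFrom (e + 1) (𝒜.nonMemberSubfamily e) := by
  refine ⟨fun s hs a ha => ?_, fun s hs j hj i hi hij his => ?_⟩
  · obtain ⟨hs, hes⟩ := mem_nonMemberSubfamily.1 hs
    have := h.1 _ hs a ha
    have : a ≠ e := fun hae => hes (hae ▸ ha)
    omega
  · obtain ⟨hs, hes⟩ := mem_nonMemberSubfamily.1 hs
    refine mem_nonMemberSubfamily.2 ⟨h.2 s hs j hj i (by omega) hij his, ?_⟩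
    simp only [mem_insert, mem_erase, not_or, not_and]
    exact ⟨by omega, fun _ => hes⟩

theorem shadow_nonMemberSubfamily_subset (h : IsShiftedFrom e 𝒜) :
    ∂ (𝒜.nonMemberSubfamily e) ⊆ 𝒜.memberSubfamily e := by
  intro t ht
  obtain ⟨s, hs, j, hj, rfl⟩ := mem_shadow_iff.1 ht
  obtain ⟨hs, hes⟩ := mem_nonMemberSubfamily.1 hs
  have hej : e < j := lt_of_le_of_ne (h.1 s hs j hj) fun hej => hes (hej ▸ hj)
  exact mem_memberSubfamily.2 ⟨h.2 s hs j hj e le_rfl hej hes, fun he => hes (mem_of_mem_erase he)⟩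

theorem memberSubfamily_nonempty (h : IsShiftedFrom e 𝒜) (h𝒜 : ∃ s ∈ 𝒜, s.Nonempty) :
    (𝒜.memberSubfamily e).Nonempty := by
  obtain ⟨s, hs, j, hj⟩ := h𝒜
  by_cases hes : e ∈ s
  · exact ⟨s.erase e, mem_memberSubfamily.2 ⟨by rwa [insert_erase hes], notMem_erase e s⟩⟩
  · exact ⟨s.erase j, h.shadow_nonMemberSubfamily_subset
      (erase_mem_shadow (mem_nonMemberSubfamily.2 ⟨hs, hes⟩) hj)⟩

/-- Frankl's proof of Lovász's form of the Kruskal–Katona theorem: split `𝒜` at `e` into its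
link `ℬ₁` and the sets `ℬ₀` avoiding `e`. If `ℬ₁` is large, induct on `ℬ₁`; otherwise `ℬ₀` is
large, and induction on `ℬ₀` contradicts `∂ ℬ₀ ⊆ ℬ₁`. -/
theorem choose_le_card_shadow {e r : ℕ} {𝒜 : Finset (Finset ℕ)} (h : IsShiftedFrom e 𝒜)
    (h𝒜 : (𝒜 : Set (Finset ℕ)).Sized (r + 1)) (hne : 𝒜.Nonempty) {x : ℝ} (hx : (r : ℝ) ≤ x)
    (hcard : Ring.choose x (r + 1) ≤ #𝒜) : Ring.choose x r ≤ #(∂ 𝒜) := by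
  obtain ⟨s, hs⟩ := hne
  have hs_le : (r + 1 : ℝ) ≤ #(∂ 𝒜) := by
    exact_mod_cast (h𝒜 hs).symm.trans_le (card_le_card_shadow hs)
  cases r with
  | zero => simpa using hs_le
  | succ q =>
  push_cast at hx hs_le
  rcases le_or_gt x (q + 2) with hxq | hxq
  · have := Ring.choose_le_add_one (r := q + 1) (x := x) (by push_cast; linarith)
      (by push_cast; linarith)
    push_cast at this
    linarith
  set ℬ₁ := 𝒜.memberSubfamily e
  set ℬ₀ := 𝒜.nonMemberSubfamily e
  have hsplit : (#ℬ₁ : ℝ) + #ℬ₀ = #𝒜 := by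
    exact_mod_cast card_memberSubfamily_add_card_nonMemberSubfamily e 𝒜
  have hpascal (k : ℕ) :
      Ring.choose x (k + 1) = Ring.choose (x - 1) k + Ring.choose (x - 1) (k + 1) := by
    simpa using Ring.choose_succ_succ (x - 1) k
  have hℬ₁ne : ℬ₁.Nonempty :=
    h.memberSubfamily_nonempty ⟨s, hs, card_pos.1 (by rw [h𝒜 hs]; omega)⟩
  rcases le_or_gt (Ring.choose (x - 1) (q + 1)) #ℬ₁ with hℬ₁ | hℬ₁
  · have ih := h.memberSubfamily.choose_le_card_shadow (h𝒜.memberSubfamily e) hℬ₁ne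
      (x := x - 1) (by linarith) hℬ₁
    have hℬ₁_le : (#ℬ₁ + #(∂ ℬ₁) : ℝ) ≤ #(∂ 𝒜) := by
      exact_mod_cast card_memberSubfamily_add_card_shadow_le e 𝒜
    rw [hpascal]
    linarith
  · have hℬ₀ : Ring.choose (x - 1) (q + 2) < #ℬ₀ := by
      have := hpascal (q + 1)
      linarith
    have hℬ₀ne : ℬ₀.Nonempty := card_pos.1 <| Nat.cast_pos.1 <|
      (Ring.choose_nonneg (by push_cast; linarith)).trans_lt hℬ₀
    have ih := h.nonMemberSubfamily.choose_le_card_shadow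
      (h𝒜.mono (coe_subset.2 (filter_subset _ _))) hℬ₀ne (x := x - 1) (by push_cast; linarith)
      hℬ₀.le
    have : (#(∂ ℬ₀) : ℝ) ≤ #ℬ₁ := by
      exact_mod_cast card_le_card h.shadow_nonMemberSubfamily_subset
    linarith
termination_by r + #𝒜
decreasing_by
  all_goals
    have := card_memberSubfamily_add_card_nonMemberSubfamily e 𝒜
    have : 0 < #(𝒜.memberSubfamily e) := hℬ₁ne.card_pos
    omega

end IsShiftedFrom

namespace Finset

theorem kruskal_katona_lovasz_form_real {n r : ℕ} {𝒜 : Finset (Finset (Fin n))}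
    (h𝒜 : (𝒜 : Set (Finset (Fin n))).Sized (r + 1)) (hne : 𝒜.Nonempty) {x : ℝ}
    (hx : (r : ℝ) ≤ x) (hcard : Ring.choose x (r + 1) ≤ #𝒜) : Ring.choose x r ≤ #(∂ 𝒜) := by
  obtain ⟨𝒞, h𝒞, h𝒞card⟩ := Colex.exists_isInitSeg_card_eq (α := Fin n)
    (h𝒜.card_le.trans_eq (by rw [Fintype.card_fin]))
  have h𝒟 := h𝒞.isShiftedFrom_map_valEmbedding.choose_le_card_shadow
    (fun s hs => by
      obtain ⟨t, ht, rfl⟩ := mem_map.1 (mem_coe.1 hs)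
      simpa using h𝒞.1 ht)
    (by simpa [← card_pos, h𝒞card] using hne) hx (by rwa [card_map, h𝒞card])
  rw [shadow_map_mapEmbedding, card_map] at h𝒟
  exact h𝒟.trans (by exact_mod_cast kruskal_katona h𝒜 h𝒞card.le h𝒞)

theorem exists_le_pow_mul_card_and_mul_card_le_card_upShadow {r : ℕ}
    {A : Finset (Finset (Fin (2 * (r + 1))))}
    (hA : (A : Set (Finset (Fin (2 * (r + 1))))).Sized (r + 1)) (hne : A.Nonempty)
    (hle : #A ≤ (2 * r + 1).choose (r + 1)) :
    ∃ t : ℝ, 0 < t ∧ ((2 * r + 1).choose (r + 1) : ℝ) ≤ t ^ (r + 1) * #A ∧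
      t * #A ≤ #(∂⁺ A) := by
  obtain ⟨x, ⟨hx₁, hx₂⟩, hxA⟩ := Ring.exists_mem_Icc_choose_eq (by omega)
    (Nat.one_le_cast.2 hne.card_pos) (Nat.cast_le.2 hle)
  push_cast at hx₁ hx₂
  have hxr : 0 < x - r := by linarith
  refine ⟨(r + 1) / (x - r), by positivity, ?_, ?_⟩
  · have := Ring.choose_le_pow_mul_choose (r := r) (y := ((2 * r + 1 : ℕ) : ℝ)) (by linarith)
      (by push_cast; linarith)
    rwa [Ring.choose_natCast, hxA, show ((2 * r + 1 : ℕ) : ℝ) - r = r + 1 by push_cast; ring]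
      at this
  · have hcompl : (Aᶜˢ : Set (Finset (Fin (2 * (r + 1))))).Sized (r + 1) := by
      convert hA.compls using 1
      simp only [Fintype.card_fin]; omega
    have := kruskal_katona_lovasz_form_real hcompl (compls_nonempty.2 hne) (x := x) (by linarith)
      (by rw [card_compls, hxA])
    rw [shadow_compls, card_compls] at this
    have hsucc := Ring.choose_succ_right_eq x r
    rw [hxA] at hsucc
    calc (r + 1) / (x - r) * #A = Ring.choose x r := by field_simp; linarith
      _ ≤ _ := this

end Finset

/-- Isoperimetric consequence of Kruskal–Katona: for a nonempty family `A` of `k`-subsets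
of `[2k]` with `|A| ≤ N/2` (where `N = C(2k,k)`), the upper shadow satisfies
`(|∇A| - |A|)/|A| ≥ (log 2 / k) · log₂(N / (2|A|))`. -/
theorem stmt_6 (k : ℕ) (hk : 1 ≤ k) (A : Finset (Finset (Fin (2 * k))))
    (hA : ∀ s ∈ A, s.card = k) (hne : A.Nonempty)
    (hle : (A.card : ℝ) ≤ ((2 * k).choose k : ℝ) / 2) :
    (Real.log 2 / k) * Real.logb 2 (((2 * k).choose k : ℝ) / (2 * A.card)) ≤
      ((A.upShadow.card : ℝ) - A.card) / A.card := by
  obtain ⟨r, rfl⟩ := Nat.exists_eq_add_of_le' hk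
  set C : ℕ := (2 * r + 1).choose (r + 1)
  have hN : (((2 * (r + 1)).choose (r + 1) : ℕ) : ℝ) = 2 * C := by
    exact_mod_cast Nat.choose_two_mul_succ_eq_two_mul_choose r
  have hA₀ : (0 : ℝ) < #A := by exact_mod_cast hne.card_pos
  have hC₀ : (0 : ℝ) < C := by exact_mod_cast Nat.choose_pos (by omega)
  rw [hN] at hle ⊢
  obtain ⟨t, ht, hCt, htA⟩ := exists_le_pow_mul_card_and_mul_card_le_card_upShadow
    (fun s hs => hA s hs) hne (by exact_mod_cast (by linarith : (#A : ℝ) ≤ C))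
  have hlog := Real.log_le_mul_sub_one_of_le_pow (div_pos hC₀ hA₀) ht
    ((div_le_iff₀ hA₀).2 hCt)
  calc Real.log 2 / ((r + 1 : ℕ) : ℝ) * Real.logb 2 (2 * C / (2 * #A))
      = Real.log (C / #A) / (r + 1) := by
        rw [Real.logb, mul_div_mul_left _ _ two_ne_zero]
        push_cast
        field_simp
    _ ≤ t - 1 := by rw [div_le_iff₀ (by positivity)]; push_cast at hlog; linarith
    _ ≤ (#(∂⁺ A) - #A) / #A := by rw [le_div_iff₀ hA₀]; linarith
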